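/- Let μ denote the surface measure on the unit sphere S² ⊂ ℝ³ and let I̊ : ℝ³ → ℝ be twice continuously differentiable. Assume the span condition: the linear span of { (I₃ − xxᵀ)∇I̊(x) xᵀ : x ∈ S² } equals sl(3), the space of traceless real 3×3 matrices. Define F on SL(3, ℝ) = {E ∈ ℝ^{3×3} : det E = 1} by F(E) := (1/2)∫_{S²} ( I̊(φ(E, x)) − I̊(x) )² dμ(x), where φ(E, x) := E⁻¹x/‖E⁻¹x‖. Then F has an isolated global minimum at E = I₃: F(E) ≥ 0 = F(I₃) for all E ∈ SL(3, ℝ), and there exists ε > 0 such that every E ∈ SL(3, ℝ) with 0 < ‖E − I₃‖ < ε satisfies F(E) > 0. -/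

import Mathlib

open Matrix MeasureTheory

noncomputable section

abbrev E3 := EuclideanSpace ℝ (Fin 3)
abbrev M3 := Matrix (Fin 3) (Fin 3) ℝ

/-- Apply a matrix to a Euclidean vector. -/
noncomputable def mApp (M : M3) (x : E3) : E3 := Matrix.toEuclideanLin M x

/-- φ(H,x) := H⁻¹x/‖H⁻¹x‖ -/
noncomputable def sphPhi (H : M3) (x : E3) : E3 := ‖mApp H⁻¹ x‖⁻¹ • mApp H⁻¹ x

/-- outer product u vᵀ as a 3×3 matrix -/
noncomputable def outer (u v : E3) : M3 :=
  Matrix.vecMulVec ((EuclideanSpace.equiv (Fin 3) ℝ) u) ((EuclideanSpace.equiv (Fin 3) ℝ) v)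

/-- Π_x := I₃ − xxᵀ -/
noncomputable def projMat (x : E3) : M3 := 1 - outer x x

/-- The surface measure on the unit sphere S² ⊂ ℝ³, viewed as a measure on ℝ³
supported on the sphere. -/
noncomputable def μS : Measure E3 := ((volume : Measure E3).toSphere).map Subtype.val

/-- sl(3): the traceless real 3×3 matrices, as a submodule of ℝ^{3×3}. -/
noncomputable def sl3 : Submodule ℝ M3 := LinearMap.ker (Matrix.traceLinearMap (Fin 3) ℝ ℝ)

/-- Frobenius norm of a 3×3 matrix. -/
noncomputable def fnorm (A : M3) : ℝ := Real.sqrt ((Aᵀ * A).trace)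

/-! ### Auxiliary material -/

open Filter Metric
open scoped Pointwise ENNReal

local notation "⟪" x ", " y "⟫ℝ" => @inner ℝ _ _ x y

attribute [local instance] Matrix.linftyOpNormedRing Matrix.linftyOpNormedAlgebra

/-! #### Basic algebra on `mApp`, `outer`, `fnorm` -/

lemma mApp_apply (M : M3) (x : E3) (i : Fin 3) : mApp M x i = ∑ j, M i j * x j := rfl

lemma outer_apply (u v : E3) (i j : Fin 3) : outer u v i j = u i * v j := rfl

lemma mApp_mul (M N : M3) (x : E3) : mApp (M * N) x = mApp M (mApp N x) := by
  ext i
  simp only [mApp_apply, Matrix.mul_apply, Finset.sum_mul, Finset.mul_sum]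
  rw [Finset.sum_comm]
  apply Finset.sum_congr rfl
  intro j _
  apply Finset.sum_congr rfl
  intro k _
  ring

lemma mApp_one (x : E3) : mApp 1 x = x := by
  ext i
  simp [mApp_apply, Matrix.one_apply]

lemma continuous_mApp (M : M3) : Continuous (fun x => mApp M x) :=
  (Matrix.toEuclideanLin M).continuous_of_finiteDimensional

noncomputable def entryCLM (i j : Fin 3) : M3 →L[ℝ] ℝ :=
  LinearMap.toContinuousLinearMap ((LinearMap.proj j).comp (LinearMap.proj (R := ℝ)
    (φ := fun _ : Fin 3 => Fin 3 → ℝ) i))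

lemma differentiableAt_entry (i j : Fin 3) (A : M3) :
    DifferentiableAt ℝ (fun B : M3 => B i j) A :=
  (entryCLM i j).differentiableAt

lemma fnorm_sq (A : M3) : (Aᵀ * A).trace = ∑ i, ∑ j, (A i j)^2 := by
  simp only [Matrix.trace, Matrix.diag, Matrix.mul_apply, Matrix.transpose_apply]
  rw [Finset.sum_comm]
  apply Finset.sum_congr rfl
  intro i _
  apply Finset.sum_congr rfl
  intro j _
  ring

lemma entry_le_fnorm (A : M3) (i j : Fin 3) : |A i j| ≤ fnorm A := by
  rw [fnorm, fnorm_sq]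
  rw [show |A i j| = Real.sqrt ((A i j)^2) by rw [Real.sqrt_sq_eq_abs]]
  apply Real.sqrt_le_sqrt
  calc (A i j)^2 ≤ ∑ j', (A i j')^2 :=
        Finset.single_le_sum (fun k _ => sq_nonneg (A i k)) (Finset.mem_univ j)
    _ ≤ ∑ i', ∑ j', (A i' j')^2 :=
        Finset.single_le_sum (f := fun i' => ∑ j', (A i' j')^2)
          (fun k _ => Finset.sum_nonneg fun l _ => sq_nonneg _) (Finset.mem_univ i)

lemma norm_le_nine_fnorm (A : M3) : ‖A‖ ≤ 9 * fnorm A := by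
  have h1 : ‖A‖₊ ≤ ∑ i, ∑ j, ‖A i j‖₊ := by
    rw [Matrix.linfty_opNNNorm_def]
    exact Finset.sup_le fun i _ => Finset.single_le_sum
      (f := fun i => ∑ j, ‖A i j‖₊) (fun _ _ => zero_le) (Finset.mem_univ i)
  have h2 : ‖A‖ ≤ ∑ i : Fin 3, ∑ j : Fin 3, |A i j| := by
    have := NNReal.coe_mono h1
    push_cast at this
    simpa [Real.norm_eq_abs, coe_nnnorm] using this
  calc ‖A‖ ≤ ∑ i : Fin 3, ∑ j : Fin 3, |A i j| := h2
    _ ≤ ∑ _i : Fin 3, ∑ _j : Fin 3, fnorm A := by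
        apply Finset.sum_le_sum; intro i _; apply Finset.sum_le_sum; intro j _
        exact entry_le_fnorm A i j
    _ = 9 * fnorm A := by simp [Finset.sum_const]; ring

lemma fnorm_smul (c : ℝ) (A : M3) : fnorm (c • A) = |c| * fnorm A := by
  rw [fnorm, fnorm, fnorm_sq, fnorm_sq]
  rw [show ∑ i, ∑ j, ((c • A) i j)^2 = c^2 * ∑ i, ∑ j, (A i j)^2 by
    simp only [Matrix.smul_apply, smul_eq_mul, Finset.mul_sum]
    apply Finset.sum_congr rfl; intro i _; apply Finset.sum_congr rfl; intro j _; ring]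
  rw [Real.sqrt_mul (sq_nonneg c), Real.sqrt_sq_eq_abs]

lemma continuous_sqsum : Continuous (fun A : M3 => ∑ i, ∑ j, (A i j)^2) := by
  apply continuous_finset_sum; intro i _; apply continuous_finset_sum; intro j _
  exact ((entryCLM i j).continuous).pow 2

/-! #### The linear functional given by Frobenius pairing with `A` -/

noncomputable def PhiL (A : M3) : M3 →ₗ[ℝ] ℝ where
  toFun := fun M => ∑ i, ∑ j, A i j * M i j
  map_add' := fun M N => by
    simp only [Matrix.add_apply, mul_add, Finset.sum_add_distrib]
  map_smul' := fun c M => by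
    simp only [Matrix.smul_apply, smul_eq_mul, RingHom.id_apply, Finset.mul_sum]
    apply Finset.sum_congr rfl; intro i _; apply Finset.sum_congr rfl; intro j _; ring

lemma final_contra (A : M3) (htr : A.trace = 0) (hfn : ∑ i, ∑ j, A i j * A i j = 1)
    (S : Set M3) (hspan : Submodule.span ℝ S = sl3)
    (hperp : ∀ M ∈ S, ∑ i, ∑ j, A i j * M i j = 0) : False := by
  have hker : Submodule.span ℝ S ≤ LinearMap.ker (PhiL A) :=
    Submodule.span_le.mpr (fun M hM => LinearMap.mem_ker.mpr (hperp M hM))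
  have hA : A ∈ sl3 := by
    rw [sl3, LinearMap.mem_ker]
    exact htr
  rw [← hspan] at hA
  have h0 : PhiL A A = 0 := hker hA
  rw [show PhiL A A = ∑ i, ∑ j, A i j * A i j from rfl, hfn] at h0
  exact one_ne_zero h0

lemma pairing_eq (A : M3) (x g : E3) :
    ∑ i, ∑ j, A i j * (outer (mApp (projMat x) g) x) i j
      = ⟪g, mApp A x - ⟪x, mApp A x⟫ℝ • x⟫ℝ := by
  simp only [outer_apply, mApp_apply, projMat, PiLp.inner_apply, RCLike.inner_apply,
    conj_trivial, PiLp.sub_apply, PiLp.smul_apply, smul_eq_mul, Matrix.sub_apply,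
    Matrix.one_apply]
  simp only [Fin.sum_univ_three, Fin.reduceEq, if_false, if_true, reduceIte]
  ring

/-! #### Measure-theoretic facts about `μS` -/

instance : IsFiniteMeasure μS := by
  constructor
  rw [μS, Measure.map_apply measurable_subtype_coe MeasurableSet.univ]
  exact measure_lt_top _ _

lemma ae_sphere : ∀ᵐ x ∂μS, ‖x‖ = 1 := by
  rw [ae_iff, μS, Measure.map_apply measurable_subtype_coe]
  · convert measure_empty (μ := (volume : Measure E3).toSphere)
    ext ⟨y, hy⟩
    simp only [Set.mem_preimage, Set.mem_setOf_eq, Set.mem_empty_iff_false, iff_false, not_not]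
    simpa [mem_sphere_iff_norm] using hy
  · have : MeasurableSet {x : E3 | ‖x‖ = 1} :=
      (isClosed_eq continuous_norm continuous_const).measurableSet
    exact this.compl

lemma sphere_eq_zero_of_ae {f : E3 → ℝ} (hf : Continuous f) (h : ∀ᵐ x ∂μS, f x = 0) :
    ∀ x ∈ sphere (0 : E3) 1, f x = 0 := by
  by_contra hcon
  push_neg at hcon
  obtain ⟨x₀, hx₀s, hx₀⟩ := hcon
  have hx₀n : ‖x₀‖ = 1 := by simpa [mem_sphere_iff_norm] using hx₀s
  set U : Set E3 := f ⁻¹' {0}ᶜ with hU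
  have hUopen : IsOpen U := (isOpen_compl_singleton).preimage hf
  have hUnull : μS U = 0 := by
    rw [ae_iff] at h
    exact measure_mono_null (fun x hx => by exact hx) h
  rw [μS, Measure.map_apply measurable_subtype_coe hUopen.measurableSet] at hUnull
  rw [Measure.toSphere_apply' _
    (hUopen.measurableSet.preimage continuous_subtype_val.measurable)] at hUnull
  rw [Subtype.image_preimage_coe] at hUnull
  set C : Set E3 := Set.Ioo (0:ℝ) 1 • (sphere (0:E3) 1 ∩ U) with hC
  have hCeq : C = {z : E3 | ‖z‖ ∈ Set.Ioo (0:ℝ) 1 ∧ ‖z‖⁻¹ • z ∈ U} := by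
    ext z
    constructor
    · rintro ⟨t, ht, y, ⟨hy1, hy2⟩, rfl⟩
      have hyn : ‖y‖ = 1 := by simpa [mem_sphere_iff_norm] using hy1
      have hzn : ‖t • y‖ = t := by
        rw [norm_smul, hyn, Real.norm_eq_abs, abs_of_pos ht.1, mul_one]
      refine ⟨by rw [hzn]; exact ht, ?_⟩
      rw [hzn, smul_smul, inv_mul_cancel₀ (ne_of_gt ht.1), one_smul]
      exact hy2
    · rintro ⟨hz1, hz2⟩
      refine ⟨‖z‖, hz1, ‖z‖⁻¹ • z, ⟨?_, hz2⟩, ?_⟩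
      · have : ‖z‖ ≠ 0 := ne_of_gt hz1.1
        simp [mem_sphere_iff_norm, norm_smul, abs_of_nonneg (norm_nonneg z),
          inv_mul_cancel₀ this]
      · show ‖z‖ • ‖z‖⁻¹ • z = z
        rw [smul_smul, mul_inv_cancel₀ (ne_of_gt hz1.1), one_smul]
  have hCopen : IsOpen C := by
    rw [hCeq]
    have hV : IsOpen {z : E3 | ‖z‖ ∈ Set.Ioo (0:ℝ) 1} := isOpen_Ioo.preimage continuous_norm
    have hg : ContinuousOn (fun z : E3 => ‖z‖⁻¹ • z) {z : E3 | ‖z‖ ∈ Set.Ioo (0:ℝ) 1} := by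
      refine ContinuousOn.smul (f := fun z : E3 => ‖z‖⁻¹) (g := fun z => z) ?_ ?_
      · exact (continuous_norm.continuousOn).inv₀ fun z hz => ne_of_gt hz.1
      · exact continuousOn_id
    exact hg.isOpen_inter_preimage hV hUopen
  have hCne : ((1:ℝ)/2) • x₀ ∈ C := by
    rw [hCeq]
    constructor
    · simp [norm_smul, hx₀n]
      norm_num
    · have h1 : ‖((1:ℝ)/2) • x₀‖ = 1/2 := by simp [norm_smul, hx₀n]
      rw [h1, smul_smul]
      norm_num
      exact hx₀
  have hpos : 0 < volume C := hCopen.measure_pos volume ⟨_, hCne⟩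
  have h3 : (Module.finrank ℝ E3 : ℝ≥0∞) ≠ 0 := by
    simp [finrank_euclideanSpace_fin]
  rcases mul_eq_zero.mp hUnull with h | h
  · exact h3 h
  · exact (ne_of_gt hpos) h

lemma measurable_sphPhi (E : M3) : Measurable (sphPhi E) := by
  have h1 : Continuous (fun x => mApp E⁻¹ x) := continuous_mApp _
  exact ((h1.norm.measurable).inv).smul h1.measurable

lemma sphPhi_mem_sphere {E : M3} (hE : E.det = 1) {x : E3} (hx : ‖x‖ = 1) :
    ‖sphPhi E x‖ = 1 := by
  have hunit : IsUnit E.det := by rw [hE]; exact isUnit_one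
  have hv : mApp E⁻¹ x ≠ 0 := by
    intro h0
    have : mApp E (mApp E⁻¹ x) = mApp E 0 := by rw [h0]
    rw [← mApp_mul, Matrix.mul_nonsing_inv E hunit, mApp_one] at this
    have hz : mApp E 0 = 0 := by ext i; simp [mApp_apply]
    rw [hz] at this
    rw [this] at hx; simp at hx
  rw [sphPhi, norm_smul, norm_inv, norm_norm, inv_mul_cancel₀ (norm_ne_zero_iff.mpr hv)]

lemma sphPhi_one {x : E3} (hx : ‖x‖ = 1) : sphPhi 1 x = x := by
  rw [sphPhi, Matrix.nonsing_inv_eq_ringInverse, Ring.inverse_one, mApp_one, hx]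
  simp

lemma integrable_sq (I₀ : E3 → ℝ) (hI : Continuous I₀) {E : M3} (hE : E.det = 1) :
    Integrable (fun x => (I₀ (sphPhi E x) - I₀ x) ^ 2) μS := by
  obtain ⟨C, hC⟩ := (isCompact_sphere (0:E3) 1).exists_bound_of_continuousOn hI.continuousOn
  constructor
  · exact (((hI.measurable.comp (measurable_sphPhi E)).sub
      hI.measurable).pow_const 2).aestronglyMeasurable
  · apply HasFiniteIntegral.of_bounded (C := (2 * C)^2)
    filter_upwards [ae_sphere] with x hx
    have h1 : ‖I₀ (sphPhi E x)‖ ≤ C :=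
      hC _ (by simpa [mem_sphere_iff_norm] using sphPhi_mem_sphere hE hx)
    have h2 : ‖I₀ x‖ ≤ C := hC _ (by simpa [mem_sphere_iff_norm] using hx)
    rw [Real.norm_eq_abs, abs_of_nonneg (sq_nonneg _)]
    rw [Real.norm_eq_abs] at h1 h2
    nlinarith [abs_nonneg (I₀ x), abs_le.mp h1, abs_le.mp h2]

/-! #### Differentiability facts -/

lemma hasFDerivAt_normalize {x : E3} (hx : ‖x‖ = 1) :
    HasFDerivAt (fun y : E3 => ‖y‖⁻¹ • y)
      (ContinuousLinearMap.id ℝ E3 - (innerSL ℝ x).smulRight x) x := by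
  have hxx : ⟪x, x⟫ℝ = 1 := by rw [real_inner_self_eq_norm_sq, hx]; norm_num
  have hq : HasFDerivAt (fun y : E3 => ⟪y, y⟫ℝ)
      ((fderivInnerCLM ℝ (x, x)).comp ((ContinuousLinearMap.id ℝ E3).prod
        (ContinuousLinearMap.id ℝ E3))) x :=
    (hasFDerivAt_id x).inner ℝ (hasFDerivAt_id x)
  have hinv : HasDerivAt (fun t : ℝ => (Real.sqrt t)⁻¹) (-(1/2)) ((fun y : E3 => ⟪y, y⟫ℝ) x) := by
    simp only [hxx]
    have h1 : HasDerivAt Real.sqrt (1/(2*Real.sqrt 1)) 1 := Real.hasDerivAt_sqrt one_ne_zero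
    have h2 := h1.inv (by simp)
    refine HasDerivAt.congr_deriv h2 ?_
    simp [Real.sqrt_one]
  have hc := hinv.comp_hasFDerivAt (f := fun y : E3 => ⟪y, y⟫ℝ) x hq
  have hsm := hc.smul (hasFDerivAt_id x)
  rw [show (fun y : E3 => ‖y‖⁻¹ • y)
      = (fun y : E3 => ((fun t : ℝ => (Real.sqrt t)⁻¹) ∘ (fun y : E3 => ⟪y, y⟫ℝ)) y • id y) from
    funext fun y => by simp only [Function.comp, id]; rw [norm_eq_sqrt_real_inner]]
  refine hsm.congr_fderiv ?_
  ext v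
  simp [Function.comp, hxx, Real.sqrt_one, real_inner_comm x v]
  rw [hx]
  ring

lemma fderiv_inner_gradient (I₀ : E3 → ℝ) (x v : E3) :
    fderiv ℝ I₀ x v = ⟪gradient I₀ x, v⟫ℝ := by
  rw [gradient, InnerProductSpace.toDual_symm_apply]

lemma hasFDerivAt_psi (I₀ : E3 → ℝ) (hI : ContDiff ℝ 2 I₀) {x : E3} (hx : ‖x‖ = 1) :
    ∃ L : M3 →L[ℝ] ℝ, HasFDerivAt (fun E : M3 => I₀ (sphPhi E x)) L (1 : M3) ∧
      ∀ A : M3, L A = -⟪gradient I₀ x, mApp A x - ⟪x, mApp A x⟫ℝ • x⟫ℝ := by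
  have hinv1 : HasFDerivAt (Ring.inverse : M3 → M3)
      (-(ContinuousLinearMap.mulLeftRight ℝ M3 1 1)) (1 : M3) := by
    simpa using hasFDerivAt_ringInverse (1 : M3ˣ)
  let Tlin : M3 →ₗ[ℝ] E3 :=
    { toFun := fun M => mApp M x
      map_add' := fun M N => by simp [mApp, map_add]
      map_smul' := fun c M => by simp [mApp, _root_.map_smul] }
  let T : M3 →L[ℝ] E3 := Tlin.toContinuousLinearMap
  have hv : HasFDerivAt (fun E : M3 => mApp (Ring.inverse E) x)
      (T.comp (-(ContinuousLinearMap.mulLeftRight ℝ M3 1 1))) (1 : M3) :=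
    T.hasFDerivAt.comp (1 : M3) hinv1
  have hval : mApp (Ring.inverse (1 : M3)) x = x := by rw [Ring.inverse_one, mApp_one]
  have hn : HasFDerivAt (fun y : E3 => ‖y‖⁻¹ • y)
      (ContinuousLinearMap.id ℝ E3 - (innerSL ℝ x).smulRight x)
      (mApp (Ring.inverse (1 : M3)) x) := by rw [hval]; exact hasFDerivAt_normalize hx
  have hI' : HasFDerivAt I₀ (fderiv ℝ I₀ x)
      ((fun y : E3 => ‖y‖⁻¹ • y) (mApp (Ring.inverse (1 : M3)) x)) := by
    rw [hval]
    simp only [hx, inv_one, one_smul]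
    exact ((hI.differentiable (by norm_num)) x).hasFDerivAt
  have hcomp0 := hn.comp (1 : M3) hv
  have hcomp := hI'.comp (1 : M3) hcomp0
  refine ⟨(fderiv ℝ I₀ x).comp ((ContinuousLinearMap.id ℝ E3 -
      (innerSL ℝ x).smulRight x).comp (T.comp
      (-(ContinuousLinearMap.mulLeftRight ℝ M3 1 1)))), ?_, ?_⟩
  · have heq : (fun E : M3 => I₀ (sphPhi E x)) =
        I₀ ∘ (fun y : E3 => ‖y‖⁻¹ • y) ∘ (fun E : M3 => mApp (Ring.inverse E) x) := by
      funext E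
      show I₀ (sphPhi E x) = I₀ (‖mApp (Ring.inverse E) x‖⁻¹ • mApp (Ring.inverse E) x)
      rw [sphPhi, Matrix.nonsing_inv_eq_ringInverse]
    rw [heq]
    exact hcomp
  · intro A
    have h1 : T A = mApp A x := rfl
    simp only [ContinuousLinearMap.coe_comp', Function.comp_apply, ContinuousLinearMap.comp_apply,
      ContinuousLinearMap.neg_apply, ContinuousLinearMap.mulLeftRight_apply,
      one_mul, mul_one, map_neg, ContinuousLinearMap.sub_apply,
      ContinuousLinearMap.id_apply, ContinuousLinearMap.smulRight_apply, innerSL_apply_apply, h1]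
    change fderiv ℝ I₀ x (T (-(1 * A * 1)) - ⟪x, T (-(1 * A * 1))⟫ℝ • x) = _
    rw [fderiv_inner_gradient I₀]
    rw [one_mul, mul_one, map_neg, h1, inner_neg_right, neg_smul, ← inner_neg_right]
    congr 1
    abel

lemma differentiableAt_det (A : M3) : DifferentiableAt ℝ (Matrix.det : M3 → ℝ) A := by
  have h : (Matrix.det : M3 → ℝ) = fun B : M3 =>
      B 0 0 * B 1 1 * B 2 2 - B 0 0 * B 1 2 * B 2 1 - B 0 1 * B 1 0 * B 2 2 +
      B 0 1 * B 1 2 * B 2 0 + B 0 2 * B 1 0 * B 2 1 - B 0 2 * B 1 1 * B 2 0 := by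
    funext B; exact Matrix.det_fin_three B
  rw [h]
  have d := fun i j => differentiableAt_entry i j A
  exact (((((((d 0 0).mul (d 1 1)).mul (d 2 2)).sub
    (((d 0 0).mul (d 1 2)).mul (d 2 1))).sub
    (((d 0 1).mul (d 1 0)).mul (d 2 2))).add
    (((d 0 1).mul (d 1 2)).mul (d 2 0))).add
    (((d 0 2).mul (d 1 0)).mul (d 2 1))).sub
    (((d 0 2).mul (d 1 1)).mul (d 2 0))

lemma det_deriv_one : ∃ D : M3 →L[ℝ] ℝ, HasFDerivAt (Matrix.det : M3 → ℝ) D (1 : M3) ∧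
    ∀ A : M3, D A = A.trace := by
  refine ⟨fderiv ℝ Matrix.det (1 : M3), (differentiableAt_det 1).hasFDerivAt, fun A => ?_⟩
  have hc : HasDerivAt (fun t : ℝ => (1 : M3) + t • A) A 0 := by
    have := ((hasDerivAt_id (0:ℝ)).smul_const A).const_add (1 : M3)
    simp only [id_eq, one_smul] at this
    exact this
  have h1 : HasDerivAt (fun t : ℝ => Matrix.det ((1 : M3) + t • A))
      (fderiv ℝ Matrix.det (1 : M3) A) 0 := by
    have hdet1 : HasFDerivAt (Matrix.det : M3 → ℝ) (fderiv ℝ Matrix.det 1)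
        ((1 : M3) + (0:ℝ) • A) := by
      simpa using (differentiableAt_det 1).hasFDerivAt
    exact hdet1.comp_hasDerivAt 0 hc
  set Q : Polynomial ℝ :=
    (Matrix.det (1 + (Polynomial.X : Polynomial ℝ) • A.map Polynomial.C)).divX.divX with hQ
  have heq : (fun t : ℝ => Matrix.det ((1 : M3) + t • A)) =
      fun t : ℝ => 1 + A.trace * t + Polynomial.eval t Q * t ^ 2 := by
    funext t; rw [Matrix.det_one_add_smul t A]
  have h2 : HasDerivAt (fun t : ℝ => Matrix.det ((1 : M3) + t • A)) A.trace 0 := by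
    rw [heq]
    have ha : HasDerivAt (fun t : ℝ => A.trace * t) A.trace 0 := by
      simpa using (hasDerivAt_id (0:ℝ)).const_mul A.trace
    have hq : HasDerivAt (fun t : ℝ => Polynomial.eval t Q * t ^ 2)
        (Polynomial.eval 0 (Polynomial.derivative Q) * 0 ^ 2 +
          Polynomial.eval 0 Q * (2 * 0 ^ 1)) 0 :=
      (Q.hasDerivAt 0).mul (by simpa using hasDerivAt_pow 2 (0:ℝ))
    have := (ha.const_add (1:ℝ)).add hq
    simpa [Pi.add_def] using this
  exact h1.unique h2

lemma deriv_vanish {f : M3 → ℝ} {D : M3 →L[ℝ] ℝ} (hf : HasFDerivAt f D (1 : M3))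
    (t : ℕ → ℝ) (Amat : ℕ → M3) (A : M3)
    (ht : ∀ n, 0 < t n) (htlim : Tendsto t atTop (nhds 0))
    (hAb : ∀ n, ‖Amat n‖ ≤ 9) (hAlim : Tendsto Amat atTop (nhds A))
    (hfE : ∀ n, f (1 + t n • Amat n) = f 1) : D A = 0 := by
  set E : ℕ → M3 := fun n => 1 + t n • Amat n with hE
  have hEsub : ∀ n, E n - 1 = t n • Amat n := fun n => by simp [hE]
  have hEnorm : ∀ n, ‖E n - 1‖ ≤ 9 * t n := by
    intro n
    rw [hEsub n, norm_smul]
    simp only [Real.norm_eq_abs, abs_of_pos (ht n)]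
    calc t n * ‖Amat n‖ ≤ t n * 9 := mul_le_mul_of_nonneg_left (hAb n) (ht n).le
      _ = 9 * t n := by ring
  have hElim : Tendsto E atTop (nhds (1 : M3)) := by
    refine tendsto_iff_norm_sub_tendsto_zero.mpr ?_
    refine squeeze_zero (fun n => norm_nonneg _) hEnorm ?_
    simpa using htlim.const_mul 9
  have hDA : Tendsto (fun n => |D (Amat n)|) atTop (nhds (|D A|)) :=
    ((D.continuous.tendsto A).comp hAlim).abs
  have key : ∀ c : ℝ, 0 < c → |D A| ≤ 9 * c := by
    intro c hc
    have hev2 : ∀ᶠ n in atTop, |D (Amat n)| ≤ 9 * c := by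
      filter_upwards [hElim.eventually (hf.isLittleO.def hc)] with n hn
      rw [hfE n] at hn
      simp only [sub_self, zero_sub, norm_neg, hEsub n] at hn
      erw [D.map_smul, norm_smul, norm_smul] at hn
      simp only [Real.norm_eq_abs, abs_of_pos (ht n)] at hn
      nlinarith [ht n, hAb n, norm_nonneg (D (Amat n)), hn, norm_nonneg (Amat n),
        mul_le_mul_of_nonneg_left (hAb n) (mul_nonneg hc.le (ht n).le)]
    exact le_of_tendsto hDA hev2
  have hle : |D A| ≤ 0 := by
    refine le_of_forall_pos_le_add ?_
    intro ε hε
    have := key (ε / 9) (by linarith)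
    linarith
  have habs : |D A| = 0 := le_antisymm hle (abs_nonneg (D A))
  exact abs_eq_zero.mp habs

/-- Under the span condition span{Π_x ∇I̊(x) xᵀ : x ∈ S²} = sl(3), the cost
F(E) := (1/2)∫_{S²}(I̊(φ(E,x)) − I̊(x))² dμ(x) has an isolated global minimum on SL(3, ℝ)
at E = I₃. -/
theorem cost_isolated_global_minimum (I₀ : E3 → ℝ) (hI : ContDiff ℝ 2 I₀)
    (hspan : Submodule.span ℝ
      ((fun x : E3 => outer (mApp (projMat x) (gradient I₀ x)) x) '' Metric.sphere (0 : E3) 1)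
      = sl3) :
    (∀ E : M3, E.det = 1 →
      0 ≤ (1 / 2) * ∫ x, (I₀ (sphPhi E x) - I₀ x) ^ 2 ∂μS) ∧
    ((1 / 2) * ∫ x, (I₀ (sphPhi (1 : M3) x) - I₀ x) ^ 2 ∂μS) = 0 ∧
    ∃ ε > (0 : ℝ), ∀ E : M3, E.det = 1 → 0 < fnorm (E - 1) → fnorm (E - 1) < ε →
      0 < (1 / 2) * ∫ x, (I₀ (sphPhi E x) - I₀ x) ^ 2 ∂μS := by
  have hnonneg : ∀ E : M3, 0 ≤ ∫ x, (I₀ (sphPhi E x) - I₀ x) ^ 2 ∂μS :=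
    fun E => integral_nonneg fun x => sq_nonneg _
  refine ⟨fun E _ => by positivity, ?_, ?_⟩
  · have hae : (fun x => (I₀ (sphPhi (1:M3) x) - I₀ x)^2) =ᵐ[μS] fun _ => (0:ℝ) := by
      filter_upwards [ae_sphere] with x hx
      rw [sphPhi_one hx]
      simp
    rw [integral_congr_ae hae, integral_zero]
    ring
  by_contra hcon
  push_neg at hcon
  have hseq : ∀ n : ℕ, ∃ E : M3, E.det = 1 ∧ 0 < fnorm (E - 1) ∧
      fnorm (E - 1) < 1/(n+1) ∧ (1/2) * ∫ x, (I₀ (sphPhi E x) - I₀ x) ^ 2 ∂μS ≤ 0 :=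
    fun n => hcon (1/(n+1)) (by positivity)
  choose Ef hdet hpos hlt hle using hseq
  have hzero : ∀ n, ∫ x, (I₀ (sphPhi (Ef n) x) - I₀ x) ^ 2 ∂μS = 0 :=
    fun n => le_antisymm (by linarith [hle n]) (hnonneg (Ef n))
  have haezero : ∀ n, ∀ᵐ x ∂μS, I₀ (sphPhi (Ef n) x) = I₀ x := by
    intro n
    have h := (integral_eq_zero_iff_of_nonneg_ae (ae_of_all _ fun x => sq_nonneg _)
      (integrable_sq I₀ hI.continuous (hdet n))).mp (hzero n)
    filter_upwards [h] with x hx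
    have hx' : (I₀ (sphPhi (Ef n) x) - I₀ x) ^ 2 = 0 := hx
    have := pow_eq_zero_iff (n := 2) (by norm_num) |>.mp hx'
    linarith [this]
  set t : ℕ → ℝ := fun n => fnorm (Ef n - 1) with hts
  set Am : ℕ → M3 := fun n => (t n)⁻¹ • (Ef n - 1) with hAms
  have htlim : Tendsto t atTop (nhds 0) :=
    squeeze_zero (fun n => (hpos n).le) (fun n => (hlt n).le)
      tendsto_one_div_add_atTop_nhds_zero_nat
  have hAfn : ∀ n, fnorm (Am n) = 1 := by
    intro n
    rw [hAms]
    simp only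
    rw [fnorm_smul, abs_inv, abs_of_pos (hpos n)]
    exact inv_mul_cancel₀ (ne_of_gt (hpos n))
  have hAb : ∀ n, ‖Am n‖ ≤ 9 := by
    intro n
    calc ‖Am n‖ ≤ 9 * fnorm (Am n) := norm_le_nine_fnorm _
      _ = 9 := by rw [hAfn n]; ring
  have hmem : ∀ n, Am n ∈ closedBall (0:M3) 9 := by
    intro n
    rw [mem_closedBall, dist_eq_norm, sub_zero]
    exact hAb n
  obtain ⟨A, -, φ, hφ, hAlim⟩ := (isCompact_closedBall (0:M3) 9).tendsto_subseq hmem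
  have hEeq : ∀ n, (1 : M3) + (t (φ n)) • (Am (φ n)) = Ef (φ n) := by
    intro n
    rw [hAms]
    simp only
    rw [smul_smul, mul_inv_cancel₀ (ne_of_gt (hpos _)), one_smul, add_sub_cancel]
  have htlim' : Tendsto (fun n => t (φ n)) atTop (nhds 0) := htlim.comp hφ.tendsto_atTop
  -- trace A = 0
  obtain ⟨D, hD, hDval⟩ := det_deriv_one
  have htr : A.trace = 0 := by
    have h0 : D A = 0 := by
      refine deriv_vanish hD (fun n => t (φ n)) (fun n => Am (φ n)) A
        (fun n => hpos _) htlim' (fun n => hAb _) hAlim (fun n => ?_)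
      show Matrix.det ((1:M3) + t (φ n) • Am (φ n)) = Matrix.det 1
      rw [hEeq n, hdet _, Matrix.det_one]
    rw [hDval A] at h0
    exact h0
  -- the perpendicularity function vanishes a.e.
  set fA : E3 → ℝ := fun x => ⟪gradient I₀ x, mApp A x - ⟪x, mApp A x⟫ℝ • x⟫ℝ with hfA
  have hfA_ae : ∀ᵐ x ∂μS, fA x = 0 := by
    filter_upwards [ae_sphere, ae_all_iff.mpr haezero] with x hx1 hx2
    obtain ⟨L, hL, hLval⟩ := hasFDerivAt_psi I₀ hI hx1
    have h0 : L A = 0 := by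
      refine deriv_vanish hL (fun n => t (φ n)) (fun n => Am (φ n)) A
        (fun n => hpos _) htlim' (fun n => hAb _) hAlim (fun n => ?_)
      show I₀ (sphPhi ((1:M3) + t (φ n) • Am (φ n)) x) = I₀ (sphPhi 1 x)
      rw [hEeq n, hx2 (φ n), sphPhi_one hx1]
    have := hLval A
    rw [h0] at this
    rw [hfA]
    simp only
    linarith [this]
  have hfA_cont : Continuous fA := by
    have hgrad : Continuous (fun x => gradient I₀ x) := by
      have h1 : Continuous (fderiv ℝ I₀) := hI.continuous_fderiv (by norm_num)
      exact ((InnerProductSpace.toDual ℝ E3).symm.continuous).comp h1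
    have h2 : Continuous (fun x : E3 => mApp A x - ⟪x, mApp A x⟫ℝ • x) := by
      apply Continuous.sub (continuous_mApp A)
      exact (continuous_id.inner (𝕜 := ℝ) (continuous_mApp A)).smul continuous_id
    exact hgrad.inner h2
  have hsph : ∀ x ∈ sphere (0:E3) 1, fA x = 0 := sphere_eq_zero_of_ae hfA_cont hfA_ae
  -- sum of squares of A is 1
  have hfn : ∑ i, ∑ j, A i j * A i j = 1 := by
    have h1 : Tendsto (fun n => ∑ i, ∑ j, (Am (φ n) i j)^2) atTop
        (nhds (∑ i, ∑ j, (A i j)^2)) := (continuous_sqsum.tendsto A).comp hAlim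
    have h2 : ∀ n, ∑ i, ∑ j, (Am (φ n) i j)^2 = 1 := by
      intro n
      have h3 := hAfn (φ n)
      rw [fnorm] at h3
      have h4 : ((Am (φ n))ᵀ * Am (φ n)).trace = 1 := by
        have h5 : (0:ℝ) ≤ ((Am (φ n))ᵀ * Am (φ n)).trace := by
          rw [fnorm_sq]
          exact Finset.sum_nonneg fun i _ => Finset.sum_nonneg fun j _ => sq_nonneg _
        nlinarith [Real.sq_sqrt h5, h3]
      rw [← fnorm_sq, h4]
    rw [show (fun n => ∑ i, ∑ j, (Am (φ n) i j)^2) = fun _ => (1:ℝ) from funext h2] at h1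
    have h6 : ∑ i, ∑ j, (A i j)^2 = 1 := tendsto_nhds_unique h1 tendsto_const_nhds
    calc ∑ i, ∑ j, A i j * A i j = ∑ i, ∑ j, (A i j)^2 := by
          apply Finset.sum_congr rfl; intro i _; apply Finset.sum_congr rfl; intro j _; ring
      _ = 1 := h6
  -- contradiction via the span condition
  refine final_contra A htr hfn _ hspan ?_
  rintro M ⟨x, hxs, rfl⟩
  rw [pairing_eq A x (gradient I₀ x)]
  exact hsph x hxs

end
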